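/- Run Algorithm 1 indefinitely on an IMAB instance I = (f_1, …, f_k) with k ≥ 2 arms, and for each arm i let L_i = sup_{t∈ℕ} N_i(t) be the total number of times arm i is ever pulled. Then for every arm i, if L_i is finite, the arm has stopped improving at its last pull: f_i(L_i) − f_i(L_i − 1) = 0. -/

import Mathlib

open scoped Classical

/-- A reward function: bounded in [0,1], nondecreasing, with decreasing marginal returns. -/
def IsRewardFn (f : ℕ → ℝ) : Prop :=
  (∀ n, 0 ≤ f n) ∧ (∀ n, f n ≤ 1) ∧ Monotone f ∧
    ∀ n, 1 ≤ n → f (n + 1) - f n ≤ f n - f (n - 1)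

/-- Cumulative reward from pulling an arm with reward function `f` for `N` pulls. -/
noncomputable def Rew (f : ℕ → ℝ) (N : ℕ) : ℝ := ∑ n ∈ Finset.Icc 1 N, f n

/-- Offline optimum: the best total reward over all allocations of `T` pulls to the `k` arms. -/
noncomputable def OPT {k : ℕ} (f : Fin k → ℕ → ℝ) (T : ℕ) : ℝ :=
  sSup {x : ℝ | ∃ M : Fin k → ℕ, (∑ i, M i) = T ∧ x = ∑ i, Rew (f i) (M i)}

/-- The arm pulled by Algorithm 1 (Horizon-Unaware Improving Bandits) at (0-indexed) step `t`,
given the current pull counts `N`.  During the first `2 * k` steps each arm is pulled twice,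
in round-robin order; afterwards the algorithm pulls an arm maximizing the optimistic estimate
`p i`, breaking ties in favor of the smallest count `N i` and then the smallest index. -/
noncomputable def alg1Pull {k : ℕ} [NeZero k] (f : Fin k → ℕ → ℝ)
    (N : Fin k → ℕ) (t : ℕ) : Fin k :=
  if t < 2 * k then ⟨t % k, Nat.mod_lt t (NeZero.pos k)⟩
  else
    let Nstar := Finset.univ.sup N
    let p : Fin k → ℝ := fun i =>
      Rew (f i) (N i) + ∑ n ∈ Finset.Icc 1 (Nstar - N i),
        (f i (N i) + (n : ℝ) * (f i (N i) - f i (N i - 1)))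
    ((Finset.univ.filter fun i : Fin k =>
        (∀ j, p j ≤ p i) ∧ ∀ j, (∀ l, p l ≤ p j) → N i ≤ N j).min).getD
      ⟨0, NeZero.pos k⟩

/-- `alg1Counts f t i` is the number of pulls of arm `i` made by Algorithm 1
during the first `t` steps on the instance `f`. -/
noncomputable def alg1Counts {k : ℕ} [NeZero k] (f : Fin k → ℕ → ℝ) : ℕ → Fin k → ℕ
  | 0 => fun _ => 0
  | t + 1 => fun i =>
      alg1Counts f t i + if alg1Pull f (alg1Counts f t) t = i then 1 else 0

/-! Suppose `Δ := f i L - f i (L - 1) > 0`. Once arm `i` has made its last pull, its optimistic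
estimate extrapolates the slope `Δ` over the `S - L` pulls it lags behind the leader, so it grows
like `Δ S² / 2` in the largest count `S`. An arm pulled at a late time is pulled unboundedly
often, so its count `n` is large; concavity bounds its slope by `1 / n`, hence its estimate by
`S + S² / n`. As the algorithm pulls a maximizer of the estimates, `Δ S² / 2 ≲ S + S² / n`,
which fails once `S` and `n` are large. -/

open Finset Filter

namespace IsRewardFn

variable {f : ℕ → ℝ}

lemma marginal_nonneg (hf : IsRewardFn f) (n : ℕ) : 0 ≤ f n - f (n - 1) :=
  sub_nonneg.2 (hf.2.2.1 (Nat.sub_le n 1))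

lemma antitone_increment (hf : IsRewardFn f) : Antitone fun n => f (n + 1) - f n :=
  antitone_nat_of_succ_le fun n => by simpa using hf.2.2.2 (n + 1) (Nat.le_add_left 1 n)

/-- Concavity: the `n` increments up to `n` each dominate the last one and telescope to at
most `f n - f 0 ≤ 1`. -/
lemma natCast_mul_marginal_le_one (hf : IsRewardFn f) (n : ℕ) :
    (n : ℝ) * (f n - f (n - 1)) ≤ 1 := by
  rcases n with _ | n
  · simp
  calc ((n + 1 : ℕ) : ℝ) * (f (n + 1) - f (n + 1 - 1))
      = ∑ _m ∈ range (n + 1), (f (n + 1) - f n) := by simp [mul_sub]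
    _ ≤ ∑ m ∈ range (n + 1), (f (m + 1) - f m) :=
        sum_le_sum fun m hm => hf.antitone_increment (Nat.lt_succ_iff.1 (mem_range.1 hm))
    _ = f (n + 1) - f 0 := sum_range_sub f (n + 1)
    _ ≤ 1 := by linarith [hf.1 0, hf.2.1 (n + 1)]

lemma marginal_le_inv (hf : IsRewardFn f) (n : ℕ) : f n - f (n - 1) ≤ 1 / n := by
  rcases n with _ | n
  · simp
  rw [le_div_iff₀ (by positivity), mul_comm]
  exact hf.natCast_mul_marginal_le_one (n + 1)

lemma rew_nonneg (hf : IsRewardFn f) (N : ℕ) : 0 ≤ Rew f N :=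
  sum_nonneg fun n _ => hf.1 n

lemma rew_le (hf : IsRewardFn f) (N : ℕ) : Rew f N ≤ N :=
  (sum_le_sum fun n _ => hf.2.1 n).trans (by simp)

end IsRewardFn

lemma sq_le_two_mul_sum_Icc (m : ℕ) : (m : ℝ) ^ 2 ≤ 2 * ∑ n ∈ Icc 1 m, (n : ℝ) := by
  induction m with
  | zero => simp
  | succ m ih =>
    rw [sum_Icc_succ_top (by omega)]
    push_cast
    nlinarith

section Estimate

variable {ι : Type*} [Fintype ι]

/-- The optimistic estimate `p i` of Algorithm 1 for the pull counts `N`. -/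
noncomputable def pEst (f : ι → ℕ → ℝ) (N : ι → ℕ) (i : ι) : ℝ :=
  Rew (f i) (N i) + ∑ n ∈ Icc 1 (univ.sup N - N i),
    (f i (N i) + (n : ℝ) * (f i (N i) - f i (N i - 1)))

variable {f : ι → ℕ → ℝ} {i : ι}

lemma marginal_mul_sq_le_pEst (hf : IsRewardFn (f i)) (N : ι → ℕ) :
    (f i (N i) - f i (N i - 1)) * ((univ.sup N - N i : ℕ) : ℝ) ^ 2 / 2 ≤ pEst f N i := by
  set Δ := f i (N i) - f i (N i - 1)
  set m := univ.sup N - N i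
  have hΔ : 0 ≤ Δ := hf.marginal_nonneg (N i)
  have hlin : ∑ n ∈ Icc 1 m, (n : ℝ) * Δ ≤ ∑ n ∈ Icc 1 m, (f i (N i) + n * Δ) :=
    sum_le_sum fun n _ => le_add_of_nonneg_left (hf.1 _)
  have hquad : Δ * (m : ℝ) ^ 2 / 2 ≤ ∑ n ∈ Icc 1 m, (n : ℝ) * Δ := by
    rw [← sum_mul]
    nlinarith [sq_le_two_mul_sum_Icc m]
  unfold pEst
  linarith [hf.rew_nonneg (N i)]

lemma pEst_le (hf : IsRewardFn (f i)) (N : ι → ℕ) :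
    pEst f N i ≤ (univ.sup N : ℕ) + ((univ.sup N : ℕ) : ℝ) ^ 2 / N i := by
  set S := univ.sup N
  set m := S - N i
  have hNS : N i ≤ S := le_sup (mem_univ i)
  have hterm : ∀ n ∈ Icc 1 m,
      f i (N i) + (n : ℝ) * (f i (N i) - f i (N i - 1)) ≤ 1 + S / N i := by
    intro n hn
    have hnS : (n : ℝ) ≤ S := by exact_mod_cast (mem_Icc.1 hn).2.trans (Nat.sub_le S (N i))
    have := mul_le_mul hnS (hf.marginal_le_inv (N i)) (hf.marginal_nonneg _) (Nat.cast_nonneg S)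
    rw [mul_one_div] at this
    linarith [hf.2.1 (N i)]
  have hsum := sum_le_card_nsmul _ _ _ hterm
  rw [Nat.card_Icc, Nat.add_sub_cancel, nsmul_eq_mul] at hsum
  have hmS : (m : ℝ) + N i = S := by exact_mod_cast Nat.sub_add_cancel hNS
  have hmS' : (m : ℝ) * (S / N i) ≤ S ^ 2 / N i := by
    rw [sq, mul_div_assoc]
    exact mul_le_mul_of_nonneg_right (by linarith) (by positivity)
  unfold pEst
  nlinarith [hf.rew_le (N i)]

end Estimate

lemma le_apply_getD_min_tiebreak {ι : Type*} [Fintype ι] [LinearOrder ι] (p : ι → ℝ)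
    (N : ι → ℕ)
    [DecidablePred fun i => (∀ j, p j ≤ p i) ∧ ∀ j, (∀ l, p l ≤ p j) → N i ≤ N j]
    (d l : ι) :
    p l ≤ p ((univ.filter fun i => (∀ j, p j ≤ p i) ∧
      ∀ j, (∀ l, p l ≤ p j) → N i ≤ N j).min.getD d) := by
  have : Nonempty ι := ⟨d⟩
  obtain ⟨a, -, ha⟩ := exists_max_image univ p univ_nonempty
  obtain ⟨b, hb, hbmin⟩ := exists_min_image (univ.filter fun i => ∀ j, p j ≤ p i) N
    ⟨a, by simpa using fun j => ha j (mem_univ j)⟩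
  obtain ⟨c, hc⟩ := min_of_nonempty (s := univ.filter fun i => (∀ j, p j ≤ p i) ∧
    ∀ j, (∀ l, p l ≤ p j) → N i ≤ N j) ⟨b, by simp_all⟩
  rw [hc]
  exact (mem_filter.1 (mem_of_min hc)).2.1 l

section Alg1

variable {k : ℕ} [NeZero k] (f : Fin k → ℕ → ℝ)

lemma pEst_le_pEst_alg1Pull (N : Fin k → ℕ) {t : ℕ} (ht : 2 * k ≤ t) (l : Fin k) :
    pEst f N l ≤ pEst f N (alg1Pull f N t) := by
  unfold alg1Pull
  rw [if_neg (not_lt.2 ht)]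
  exact le_apply_getD_min_tiebreak (pEst f N) N _ l

lemma alg1Counts_succ (t : ℕ) (j : Fin k) :
    alg1Counts f (t + 1) j =
      alg1Counts f t j + if alg1Pull f (alg1Counts f t) t = j then 1 else 0 :=
  rfl

lemma alg1Counts_mono (j : Fin k) : Monotone (alg1Counts f · j) :=
  monotone_nat_of_le_succ fun t => by simp [alg1Counts_succ]

lemma sum_alg1Counts (t : ℕ) : ∑ j, alg1Counts f t j = t := by
  induction t with
  | zero => simp [alg1Counts]
  | succ t ih => simp [alg1Counts_succ, sum_add_distrib, ih]

lemma tendsto_sup_alg1Counts : Tendsto (fun t => univ.sup (alg1Counts f t)) atTop atTop := by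
  refine tendsto_atTop_atTop.2 fun C => ⟨k * C, fun t ht => ?_⟩
  have hsum : t ≤ k * univ.sup (alg1Counts f t) := by
    simpa [sum_alg1Counts] using sum_le_card_nsmul univ (alg1Counts f t) _
      fun j _ => le_sup (mem_univ j)
  exact Nat.le_of_mul_le_mul_left (ht.trans hsum) (NeZero.pos k)

lemma tendsto_alg1Counts_of_frequently {j : Fin k}
    (hj : ∃ᶠ t in atTop, alg1Pull f (alg1Counts f t) t = j) :
    Tendsto (alg1Counts f · j) atTop atTop := by
  refine tendsto_atTop_atTop_of_monotone (alg1Counts_mono f j) fun M => ?_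
  induction M with
  | zero => exact ⟨0, Nat.zero_le _⟩
  | succ M ih =>
    obtain ⟨t, ht⟩ := ih
    obtain ⟨s, hts, hs⟩ := (frequently_atTop.1 hj) t
    refine ⟨s + 1, ?_⟩
    rw [alg1Counts_succ, if_pos hs]
    exact Nat.succ_le_succ (ht.trans (alg1Counts_mono f j hts))

/-- Arms pulled only finitely often are eventually never pulled again, and every other arm's
count tends to infinity. -/
lemma tendsto_alg1Counts_alg1Pull :
    Tendsto (fun t => alg1Counts f t (alg1Pull f (alg1Counts f t) t)) atTop atTop := by
  refine tendsto_atTop.2 fun M => ?_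
  have hpulled : ∀ j, ∀ᶠ t in atTop,
      alg1Pull f (alg1Counts f t) t = j → M ≤ alg1Counts f t j := by
    intro j
    by_cases hj : ∃ᶠ t in atTop, alg1Pull f (alg1Counts f t) t = j
    · exact ((tendsto_alg1Counts_of_frequently f hj).eventually_ge_atTop M).mono fun _ h _ => h
    · exact (not_frequently.1 hj).mono fun _ h h' => absurd h' h
  filter_upwards [eventually_all.2 hpulled] with t ht using ht _ rfl

end Alg1

lemma add_sq_div_lt_mul_sq_div_two {Δ S n m : ℝ} (hΔ : 0 < Δ) (hSm : S ≤ 2 * m)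
    (hn : 16 ≤ Δ * n) (hS : 16 < Δ * S) : S + S ^ 2 / n < Δ * m ^ 2 / 2 := by
  have hnpos : 0 < n := by nlinarith
  have hS0 : 0 < S := by nlinarith
  have hdiv : S ^ 2 / n ≤ Δ * S ^ 2 / 16 := by
    rw [div_le_div_iff₀ hnpos (by norm_num)]
    nlinarith [sq_nonneg S]
  have hsq : S ^ 2 ≤ 4 * m ^ 2 := by nlinarith
  nlinarith

theorem alg1_finite_pulls_stops_improving_general (k : ℕ) [NeZero k]
    (f : Fin k → ℕ → ℝ) (hf : ∀ i, IsRewardFn (f i)) (i : Fin k) (L : ℕ)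
    (hub : ∀ t, alg1Counts f t i ≤ L) (hatt : ∃ t, alg1Counts f t i = L) :
    f i L - f i (L - 1) = 0 := by
  set Δ := f i L - f i (L - 1)
  by_contra hΔ0
  have hΔ : 0 < Δ := ((hf i).marginal_nonneg L).lt_of_ne' hΔ0
  obtain ⟨t₀, ht₀⟩ := hatt
  have hcount : ∀ᶠ t in atTop, alg1Counts f t i = L := eventually_atTop.2
    ⟨t₀, fun t ht => le_antisymm (hub t) (ht₀ ▸ alg1Counts_mono f i ht)⟩
  obtain ⟨t, ht, hNi, hS, hNj⟩ := ((eventually_ge_atTop (2 * k)).and (hcount.and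
    (((tendsto_sup_alg1Counts f).eventually_ge_atTop (2 * L + ⌊16 / Δ⌋₊ + 1)).and
      ((tendsto_alg1Counts_alg1Pull f).eventually_ge_atTop ⌈16 / Δ⌉₊)))).exists
  set N := alg1Counts f t
  set S := univ.sup N
  set j := alg1Pull f N t
  have hestimates : Δ * ((S - L : ℕ) : ℝ) ^ 2 / 2 ≤ S + (S : ℝ) ^ 2 / N j := calc
    _ ≤ pEst f N i := by simpa only [hNi] using marginal_mul_sq_le_pEst (hf i) N
    _ ≤ pEst f N j := pEst_le_pEst_alg1Pull f N ht i
    _ ≤ _ := pEst_le (hf j) N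
  refine (add_sq_div_lt_mul_sq_div_two hΔ ?_ ?_ ?_).not_ge hestimates
  · exact_mod_cast (by omega : S ≤ 2 * (S - L))
  · exact (div_le_iff₀' hΔ).1 ((Nat.le_ceil _).trans (by exact_mod_cast hNj))
  · refine (div_lt_iff₀' hΔ).1 ((Nat.lt_floor_add_one _).trans_le ?_)
    exact_mod_cast (by omega : ⌊16 / Δ⌋₊ + 1 ≤ S)

/-- If Algorithm 1 pulls arm `i` only finitely many times — i.e., its pull counts are bounded
and attain a maximum value `L` — then the arm has stopped improving at its last pull:
`f i L - f i (L - 1) = 0`. -/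
theorem alg1_finite_pulls_stops_improving (k : ℕ) [NeZero k] (hk : 2 ≤ k)
    (f : Fin k → ℕ → ℝ) (hf : ∀ i, IsRewardFn (f i)) (i : Fin k) (L : ℕ)
    (hub : ∀ t, alg1Counts f t i ≤ L) (hatt : ∃ t, alg1Counts f t i = L) :
    f i L - f i (L - 1) = 0 :=
  alg1_finite_pulls_stops_improving_general k f hf i L hub hatt
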